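/- arXiv:2405.05546 — 2 statements merged into one kernel-verified Lean document; each statement's English description precedes it below -/
import Mathlib

section
/- Union step on roots satisfies the atomic equate specification: with X finite, f with ≤f antisymmetric, rx ry roots of f, and g = Function.update f rx ry, we have retr g = (retr f ∪ {(rx,ry),(ry,rx)})^* , where ^* denotes reflexive-transitive closure (which here coincides with equivalence closure since retr f is an equivalence relation). -/
def lef {X : Type*} (f : X → X) (n m : X) : Prop :=
  Relation.ReflTransGen (fun a b => b = f a) n m

def eqf {X : Type*} (f : X → X) (n m : X) : Prop :=
  ∃ k, lef f n k ∧ lef f m k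

def retr {X : Type*} (f : X → X) : Set (X × X) := {p | eqf f p.1 p.2}

/-!
A `g`-path from `n` either is an `f`-path, or runs along `f` to the root `rx` and then takes the
single new edge `rx ↦ ry`, after which it stays at the root `ry`. Hence two points are joinable
under `g` iff they are joinable under `f`, or one lies below `rx` and the other below `ry`; this
is exactly the reflexive-transitive closure of `retr f` with the edge between `rx` and `ry` added,
since `retr g` is itself an equivalence relation (the path from a point is unique).
-/

section Forest

variable {X : Type*} {f : X → X}

theorem eqf_equivalence (f : X → X) : Equivalence (eqf f) :=
  Relation.equivalence_join_reflTransGen fun _ b _ hb hc => ⟨b, .refl, by rw [hc, ← hb]⟩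

theorem eq_of_lef_of_fixed {a k : X} (ha : f a = a) (h : lef f a k) : k = a := by
  induction h with
  | refl => rfl
  | tail _ hstep ih => rw [hstep, ih, ha]

end Forest

section Update

variable {X : Type*} [DecidableEq X] {f : X → X} {rx ry : X}

theorem lef_update_of_lef (hrx : f rx = rx) {a b : X} (h : lef f a b) :
    lef (Function.update f rx ry) a b := by
  refine Relation.ReflTransGen.lift' id (fun c d hcd => ?_) a b h
  by_cases hc : c = rx
  · subst hc hcd
    rw [hrx]
  · exact .single (hcd.trans (Function.update_of_ne hc ry f).symm)

theorem lef_of_lef_update (hry : f ry = ry) {n k : X} (h : lef (Function.update f rx ry) n k) :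
    lef f n k ∨ (lef f n rx ∧ k = ry) := by
  induction h using Relation.ReflTransGen.head_induction_on with
  | refl => exact .inl .refl
  | @head a c hstep _ ih =>
    by_cases ha : a = rx
    · subst ha
      rw [Function.update_self] at hstep
      subst hstep
      refine .inr ⟨.refl, ?_⟩
      rcases ih with h | ⟨_, hk⟩
      · exact eq_of_lef_of_fixed hry h
      · exact hk
    · rw [Function.update_of_ne ha] at hstep
      subst hstep
      exact ih.imp (.head rfl) (And.imp_left (.head rfl))

theorem eqf_update_of_eqf (hrx : f rx = rx) {a b : X} (h : eqf f a b) :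
    eqf (Function.update f rx ry) a b :=
  let ⟨k, ha, hb⟩ := h
  ⟨k, lef_update_of_lef hrx ha, lef_update_of_lef hrx hb⟩

theorem eqf_update_self : eqf (Function.update f rx ry) rx ry :=
  ⟨ry, .single (Function.update_self rx ry f).symm, .refl⟩

end Update

def retrWithEdge {X : Type*} (f : X → X) (rx ry : X) (a b : X) : Prop :=
  (a, b) ∈ retr f ∪ {(rx, ry), (ry, rx)}

section WithEdge

variable {X : Type*} {f : X → X} {rx ry : X}

theorem reflTransGen_retrWithEdge_of_lef {n m a b : X} (hn : lef f n a) (hm : lef f m b)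
    (hab : retrWithEdge f rx ry a b) : Relation.ReflTransGen (retrWithEdge f rx ry) n m :=
  .head (Or.inl ⟨a, hn, .refl⟩) (.head hab (.single (Or.inl ⟨b, .refl, hm⟩)))

variable [DecidableEq X]

theorem eqf_update_of_reflTransGen (hrx : f rx = rx) {n m : X}
    (h : Relation.ReflTransGen (retrWithEdge f rx ry) n m) :
    eqf (Function.update f rx ry) n m := by
  refine Relation.reflTransGen_le_of_equivalence_of_le (eqf_equivalence _)
    (fun a b hab => ?_) n m h
  rcases hab with hab | ⟨rfl, rfl⟩ | ⟨rfl, rfl⟩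
  · exact eqf_update_of_eqf hrx hab
  · exact eqf_update_self
  · exact (eqf_equivalence _).symm eqf_update_self

theorem reflTransGen_of_eqf_update (hry : f ry = ry) {n m : X}
    (h : eqf (Function.update f rx ry) n m) :
    Relation.ReflTransGen (retrWithEdge f rx ry) n m := by
  obtain ⟨k, hnk, hmk⟩ := h
  obtain ⟨hn | ⟨hn, rfl⟩, hm | ⟨hm, hk⟩⟩ :=
    And.intro (lef_of_lef_update hry hnk) (lef_of_lef_update hry hmk)
  · exact .single (Or.inl ⟨k, hn, hm⟩)
  · subst hk
    exact reflTransGen_retrWithEdge_of_lef hn hm (Or.inr (Or.inr rfl))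
  · exact reflTransGen_retrWithEdge_of_lef hn hm (Or.inr (Or.inl rfl))
  · exact .single (Or.inl ⟨rx, hn, hm⟩)

end WithEdge

theorem stmt_13_general {X : Type*} [DecidableEq X] (f : X → X)
    (rx ry : X) (hrx : f rx = rx) (hry : f ry = ry) :
    ∀ n m : X, (n, m) ∈ retr (Function.update f rx ry) ↔
      Relation.ReflTransGen
        (fun a b => (a, b) ∈ retr f ∪ {(rx, ry), (ry, rx)}) n m := fun _ _ =>
  ⟨reflTransGen_of_eqf_update hry, eqf_update_of_reflTransGen hrx⟩

theorem stmt_13 {X : Type*} [Fintype X] [DecidableEq X] (f : X → X)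
    (antisym : ∀ n m : X, lef f n m → lef f m n → n = m)
    (rx ry : X) (hrx : f rx = rx) (hry : f ry = ry) :
    ∀ n m : X, (n, m) ∈ retr (Function.update f rx ry) ↔
      Relation.ReflTransGen
        (fun a b => (a, b) ∈ retr f ∪ {(rx, ry), (ry, rx)}) n m :=
  stmt_13_general f rx ry hrx hry
end

section
/- Stability of the root bound under growth: let f g : X → X on a finite type with ≤f and ≤g antisymmetric, such that ∀ n m, n ≤f m → n ≤g m and roots g ⊆ roots f. Then for all x and rx, if rx ≤f root f x and x ≤f rx, then rx ≤g root g x and x ≤g rx. -/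
def roots {X : Type*} (f : X → X) : Set X := {n | f n = n}

section

variable {X : Type*} {f : X → X}

lemma lef_total {n a b : X} (ha : lef f n a) (hb : lef f n b) : lef f a b ∨ lef f b a :=
  Relation.ReflTransGen.total_of_right_unique (fun _ _ _ hb hc => hb.trans hc.symm) ha hb

lemma eq_of_lef_of_isFixedPt {r m : X} (hr : f r = r) (hm : lef f r m) : m = r := by
  induction hm with
  | refl => rfl
  | tail _ hstep ih => rw [hstep, ih, hr]

lemma lef_root_of_lef {root x y : X} (hroot : lef f x root ∧ f root = root) (hy : lef f x y) :
    lef f y root := by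
  rcases lef_total hy hroot.1 with h | h
  · exact h
  · rw [eq_of_lef_of_isFixedPt hroot.2 h]
    exact .refl

end

theorem stmt_17_general {X : Type*} (f g : X → X)
    (mono : ∀ n m : X, lef f n m → lef g n m)
    (rootf rootg : X → X)
    (hrootg : ∀ x, lef g x (rootg x) ∧ g (rootg x) = rootg x) :
    ∀ x rx : X, lef f rx (rootf x) → lef f x rx →
      lef g rx (rootg x) ∧ lef g x rx := by
  intro x rx _ hx
  have hgx : lef g x rx := mono x rx hx
  exact ⟨lef_root_of_lef (hrootg x) hgx, hgx⟩

theorem stmt_17 {X : Type*} [Fintype X] (f g : X → X)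
    (antisymf : ∀ n m : X, lef f n m → lef f m n → n = m)
    (antisymg : ∀ n m : X, lef g n m → lef g m n → n = m)
    (mono : ∀ n m : X, lef f n m → lef g n m)
    (hroots : roots g ⊆ roots f)
    (rootf rootg : X → X)
    (hrootf : ∀ x, lef f x (rootf x) ∧ f (rootf x) = rootf x)
    (hrootg : ∀ x, lef g x (rootg x) ∧ g (rootg x) = rootg x) :
    ∀ x rx : X, lef f rx (rootf x) → lef f x rx →
      lef g rx (rootg x) ∧ lef g x rx :=
  stmt_17_general f g mono rootf rootg hrootg
end
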